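/- Let g ∈ ℤ/p be nonzero and x ∈ ℤⁿ. The element (x,g) of Γ = ℤⁿ ⋊_ρ ℤ/p has finite order if and only if Norm_g(x) = 0, and in that case (x,g) has order exactly p. -/

import Mathlib

/-- The multiplicative group structure on `AddAut A` (composition), as in the older Mathlib. -/
instance AddAut.group {A : Type*} [Add A] : Group (AddAut A) where
  mul g h := AddEquiv.trans h g
  one := AddEquiv.refl _
  inv := AddEquiv.symm
  mul_assoc _ _ _ := rfl
  one_mul _ := rfl
  mul_one _ := rfl
  inv_mul_cancel := AddEquiv.self_trans_symm

/-- The monoid homomorphism sending an additive automorphism of `A` to the corresponding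
multiplicative automorphism of `Multiplicative A`. -/
def addAutToMulAut {A : Type*} [AddGroup A] : AddAut A →* MulAut (Multiplicative A) where
  toFun e := AddEquiv.toMultiplicative e
  map_one' := rfl
  map_mul' _ _ := rfl

/-- The semidirect product `Γ = ℤⁿ ⋊_ρ ℤ/p` (written multiplicatively), with multiplication
`(x,g)·(x',g') = (x + ρ(g)x', g+g')`. -/
abbrev Gam (p n : ℕ) (ρ : Multiplicative (ZMod p) →* AddAut (Fin n → ℤ)) : Type :=
  (Multiplicative (Fin n → ℤ)) ⋊[addAutToMulAut.comp ρ] (Multiplicative (ZMod p))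

/-! In `N ⋊[φ] G` with `N` commutative, `(x, g) ^ k = (∏_{i<k} φ(g)^i x, g ^ k)`, so when
`g ^ k = 1` the power `(x, g) ^ k` is the norm of `x`, an element of `N`. For `k = p` and
`N = ℤⁿ` torsion-free, `(x, g)` has finite order iff its norm does, i.e. iff the norm vanishes;
and then `(x, g) ^ p = 1` with `(x, g) ≠ 1`, so its order is the prime `p`. -/

namespace SemidirectProduct

variable {N G : Type*} [Group G]

theorem right_pow [Group N] {φ : G →* MulAut N} (a : N ⋊[φ] G) (k : ℕ) :
    (a ^ k).right = a.right ^ k :=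
  map_pow rightHom a k

section CommGroup

variable [CommGroup N] {φ : G →* MulAut N}

theorem left_pow (a : N ⋊[φ] G) (k : ℕ) :
    (a ^ k).left = ∏ i ∈ Finset.range k, φ (a.right ^ i) a.left := by
  induction k with
  | zero => rfl
  | succ k ih => rw [pow_succ, mul_left, ih, right_pow, Finset.prod_range_succ]

theorem pow_eq_inl_prod {a : N ⋊[φ] G} {k : ℕ} (h : a.right ^ k = 1) :
    a ^ k = inl (∏ i ∈ Finset.range k, φ (a.right ^ i) a.left) := by
  ext
  · rw [left_pow, left_inl]
  · rw [right_pow, h, right_inl]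

theorem isOfFinOrder_iff_prod_eq_one [IsMulTorsionFree N] {a : N ⋊[φ] G} {k : ℕ} (hk : k ≠ 0)
    (h : a.right ^ k = 1) :
    IsOfFinOrder a ↔ ∏ i ∈ Finset.range k, φ (a.right ^ i) a.left = 1 := by
  rw [← isOfFinOrder_pow.trans (or_iff_left hk), pow_eq_inl_prod h,
    inl_injective.isOfFinOrder_iff (f := inl), isOfFinOrder_iff_eq_one]

theorem orderOf_eq_prime_of_prod_eq_one {p : ℕ} [Fact p.Prime] {a : N ⋊[φ] G}
    (h : a.right ^ p = 1) (hright : a.right ≠ 1)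
    (hprod : ∏ i ∈ Finset.range p, φ (a.right ^ i) a.left = 1) : orderOf a = p :=
  orderOf_eq_prime (by rw [pow_eq_inl_prod h, hprod, map_one])
    fun ha => hright (by rw [ha, one_right])

end CommGroup

end SemidirectProduct

theorem prod_addAutToMulAut_comp_apply_ofAdd {p n : ℕ}
    (ρ : Multiplicative (ZMod p) →* AddAut (Fin n → ℤ)) (g : ZMod p) (x : Fin n → ℤ) (k : ℕ) :
    ∏ i ∈ Finset.range k,
        (addAutToMulAut.comp ρ) (Multiplicative.ofAdd g ^ i) (Multiplicative.ofAdd x) =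
      Multiplicative.ofAdd (∑ i ∈ Finset.range k, ((ρ (Multiplicative.ofAdd g)) ^ i) x) := by
  rw [ofAdd_sum]
  refine Finset.prod_congr rfl fun i _ => ?_
  rw [MonoidHom.comp_apply, map_pow]
  rfl

/-- for `g ≠ 0` in `ℤ/p` and `x ∈ ℤⁿ`, the element `(x,g)` of `Γ = ℤⁿ ⋊_ρ ℤ/p`
has finite order if and only if `Norm_g(x) = Σ_{i=0}^{p−1} ρ(g)^i x` vanishes, in which case
its order is exactly `p`. -/
theorem stmt2 (p n : ℕ) [Fact p.Prime]
    (ρ : Multiplicative (ZMod p) →* AddAut (Fin n → ℤ))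
    (g : ZMod p) (hg : g ≠ 0) (x : Fin n → ℤ) :
    (IsOfFinOrder (⟨Multiplicative.ofAdd x, Multiplicative.ofAdd g⟩ : Gam p n ρ) ↔
        ∑ i ∈ Finset.range p, ((ρ (Multiplicative.ofAdd g)) ^ i) x = 0) ∧
    (∑ i ∈ Finset.range p, ((ρ (Multiplicative.ofAdd g)) ^ i) x = 0 →
        orderOf (⟨Multiplicative.ofAdd x, Multiplicative.ofAdd g⟩ : Gam p n ρ) = p) := by
  have hp : p.Prime := Fact.out
  have hpow : Multiplicative.ofAdd g ^ p = 1 := by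
    rw [← ofAdd_nsmul, nsmul_eq_mul, ZMod.natCast_self, zero_mul, ofAdd_zero]
  have hnorm := prod_addAutToMulAut_comp_apply_ofAdd ρ g x p
  refine ⟨?_, fun hN => ?_⟩
  · rw [SemidirectProduct.isOfFinOrder_iff_prod_eq_one hp.ne_zero hpow, hnorm, ofAdd_eq_one]
  · exact SemidirectProduct.orderOf_eq_prime_of_prod_eq_one hpow (mt ofAdd_eq_one.mp hg)
      (by rw [hnorm, hN, ofAdd_zero])
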